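/- arXiv:2308.07696 — 2 statements merged into one kernel-verified Lean document; each statement's English description precedes it below -/
import Mathlib

section
/- Fix c > 0. There exist a constant C₀ > 0 and N₀ such that for every integer N ≥ N₀ and every vertex v ∈ V_N, |Σ_{u ∈ V_N} p(v,u)² − 4c²·(log N)/N²| ≤ C₀/N². -/
open scoped BigOperators

/-- Vertices of the discrete 2-dimensional torus. -/
abbrev Vtx (N : ℕ) : Type := ZMod N × ZMod N

/-- `ρ_N(i)`: for a residue represented in `{0,…,N−1}`, `ρ_N(i) = i` if `i ≤ N/2`
and `ρ_N(i) = N − i` otherwise. -/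
def rhoN (N : ℕ) (i : ZMod N) : ℕ :=
  if 2 * i.val ≤ N then i.val else N - i.val

/-- Torus distance `ρ(u,v) = ρ_N(u₁ − v₁) + ρ_N(u₂ − v₂)`. -/
def torusDist (N : ℕ) (u v : Vtx N) : ℕ :=
  rhoN N (u.1 - v.1) + rhoN N (u.2 - v.2)

/-- Connection probability `p(u,v) = min(c/(N·ρ(u,v)), 1)` for `u ≠ v`, `p(u,u) = 0`. -/
noncomputable def edgeProb (N : ℕ) (c : ℝ) (u v : Vtx N) : ℝ :=
  if u = v then 0 else min (c / ((N : ℝ) * (torusDist N u v : ℝ))) 1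

/-! After translating by `v`, and once `N ≥ c` makes the `min` inactive, the sum is
`(c / N)² · Σ_{a, b} (ρ_N(a) + ρ_N(b))⁻²`, the diagonal term vanishing because `0⁻¹ = 0`.
Each value `1 ≤ i < N / 2` is taken exactly twice by `ρ_N`, so this double sum is squeezed
between four copies of `Σ_{1 ≤ j, l ≤ m} (j + l)⁻²` and four copies of `Σ_{0 ≤ j, l ≤ m} (j + l)⁻²`
with `m ≈ N / 2`. Comparing `t⁻²` with the telescoping `1 / (t (t + 1))` makes each inner sum
`1 / j + O(1 / j²)`, and the harmonic bounds `log (m + 1) ≤ H_m ≤ 1 + log m` give `log N + O(1)`. -/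

open Finset

section Telescoping

variable (n : ℕ) {a : ℝ}

lemma sum_range_inv_sq_add_le (ha : 0 < a) :
    ∑ l ∈ range n, ((a + (l + 1)) ^ 2)⁻¹ ≤ a⁻¹ := by
  have hstep (l : ℕ) : ((a + (l + 1)) ^ 2)⁻¹ ≤ (a + l)⁻¹ - (a + (l + 1 : ℕ))⁻¹ := by
    have hl : 0 < a + l := by positivity
    rw [Nat.cast_succ, inv_sub_inv hl.ne' (by positivity), show a + (l + 1) - (a + l) = 1 by ring,
      one_div, sq]
    exact inv_anti₀ (by positivity) (by nlinarith)
  calc ∑ l ∈ range n, ((a + (l + 1)) ^ 2)⁻¹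
      ≤ ∑ l ∈ range n, ((a + l)⁻¹ - (a + (l + 1 : ℕ))⁻¹) := sum_le_sum fun l _ => hstep l
    _ = a⁻¹ - (a + n)⁻¹ := by simpa using sum_range_sub' (fun l : ℕ => (a + l)⁻¹) n
    _ ≤ a⁻¹ := sub_le_self _ (by positivity)

lemma inv_add_one_sub_le_sum_range_inv_sq (ha : 0 ≤ a) :
    (a + 1)⁻¹ - (a + (n + 1))⁻¹ ≤ ∑ l ∈ range n, ((a + (l + 1)) ^ 2)⁻¹ := by
  have hstep (l : ℕ) : (a + (l + 1))⁻¹ - (a + ((l + 1 : ℕ) + 1))⁻¹ ≤ ((a + (l + 1)) ^ 2)⁻¹ := by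
    have hl : 0 < a + (l + 1) := by positivity
    rw [Nat.cast_succ, inv_sub_inv hl.ne' (by positivity),
      show a + (l + 1 + 1) - (a + (l + 1)) = 1 by ring, one_div, sq]
    exact inv_anti₀ (by positivity) (by nlinarith)
  calc (a + 1)⁻¹ - (a + (n + 1))⁻¹
      = ∑ l ∈ range n, ((a + (l + 1))⁻¹ - (a + ((l + 1 : ℕ) + 1))⁻¹) := by
        simpa using (sum_range_sub' (fun l : ℕ => (a + (l + 1))⁻¹) n).symm
    _ ≤ _ := sum_le_sum fun l _ => hstep l

lemma sum_range_inv_sq_succ_le_two : ∑ l ∈ range n, (((l : ℝ) + 1) ^ 2)⁻¹ ≤ 2 := by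
  cases n with
  | zero => simp
  | succ n =>
    have hshift : ∑ l ∈ range n, ((((l + 1 : ℕ) : ℝ) + 1) ^ 2)⁻¹
        = ∑ l ∈ range n, ((1 + ((l : ℝ) + 1)) ^ 2)⁻¹ :=
      sum_congr rfl fun l _ => by push_cast; ring_nf
    have := sum_range_inv_sq_add_le n one_pos
    rw [sum_range_succ', hshift]
    norm_num at this ⊢
    linarith

end Telescoping

lemma sum_sum_inv_sq_add_le_log (m : ℕ) :
    ∑ j ∈ range (m + 1), ∑ l ∈ range (m + 1), (((j : ℝ) + l) ^ 2)⁻¹ ≤ Real.log m + 5 := by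
  have hrow₀ : ∑ l ∈ range (m + 1), ((((0 : ℕ) : ℝ) + l) ^ 2)⁻¹ ≤ 2 := by
    simpa [sum_range_succ'] using sum_range_inv_sq_succ_le_two m
  have hrow (j : ℕ) : ∑ l ∈ range (m + 1), ((((j + 1 : ℕ) : ℝ) + l) ^ 2)⁻¹
      ≤ (((j : ℝ) + 1) ^ 2)⁻¹ + ((j : ℝ) + 1)⁻¹ := by
    have := sum_range_inv_sq_add_le m (a := (j : ℝ) + 1) (by positivity)
    rw [sum_range_succ']
    push_cast
    simp only [add_zero] at this ⊢
    linarith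
  have hharmonic : (harmonic m : ℝ) = ∑ j ∈ range m, ((j : ℝ) + 1)⁻¹ := by
    push_cast [harmonic]; rfl
  calc ∑ j ∈ range (m + 1), ∑ l ∈ range (m + 1), (((j : ℝ) + l) ^ 2)⁻¹
      ≤ ∑ j ∈ range m, ((((j : ℝ) + 1) ^ 2)⁻¹ + ((j : ℝ) + 1)⁻¹) + 2 := by
        rw [sum_range_succ']
        exact add_le_add (sum_le_sum fun j _ => hrow j) hrow₀
    _ = ∑ j ∈ range m, (((j : ℝ) + 1) ^ 2)⁻¹ + harmonic m + 2 := by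
        rw [sum_add_distrib, hharmonic]
    _ ≤ 2 + (1 + Real.log m) + 2 := by
        gcongr
        · exact sum_range_inv_sq_succ_le_two m
        · exact harmonic_le_one_add_log m
    _ = Real.log m + 5 := by ring

lemma log_sub_le_sum_sum_inv_sq (m : ℕ) :
    Real.log (m + 2) - 2 ≤ ∑ j ∈ range m, ∑ l ∈ range m, (((j : ℝ) + 1 + (l + 1)) ^ 2)⁻¹ := by
  have hrow (j : ℕ) : ((j : ℝ) + 2)⁻¹ - ((m : ℝ) + 2)⁻¹
      ≤ ∑ l ∈ range m, (((j : ℝ) + 1 + (l + 1)) ^ 2)⁻¹ := by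
    have hsum := inv_add_one_sub_le_sum_range_inv_sq m (a := (j : ℝ) + 1) (by positivity)
    have htail : ((j : ℝ) + 1 + (m + 1))⁻¹ ≤ ((m : ℝ) + 2)⁻¹ :=
      inv_anti₀ (by positivity) (by linarith [(j.cast_nonneg : (0 : ℝ) ≤ j)])
    rw [add_assoc (j : ℝ) 1 1, one_add_one_eq_two] at hsum
    linarith
  have hharmonic : (harmonic (m + 1) : ℝ) = ∑ j ∈ range m, ((j : ℝ) + 2)⁻¹ + 1 := by
    push_cast [harmonic, sum_range_succ']
    norm_num [add_assoc]
  have hlog : Real.log (m + 2) ≤ harmonic (m + 1) := by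
    simpa [add_assoc, one_add_one_eq_two] using log_add_one_le_harmonic (m + 1)
  have hfrac : (m : ℝ) * ((m : ℝ) + 2)⁻¹ ≤ 1 := by
    rw [← div_eq_mul_inv, div_le_one (by positivity)]
    linarith
  calc Real.log (m + 2) - 2
      ≤ ∑ j ∈ range m, ((j : ℝ) + 2)⁻¹ - m * ((m : ℝ) + 2)⁻¹ := by linarith
    _ = ∑ j ∈ range m, (((j : ℝ) + 2)⁻¹ - ((m : ℝ) + 2)⁻¹) := by
        rw [sum_sub_distrib, sum_const, card_range, nsmul_eq_mul]
    _ ≤ _ := sum_le_sum fun j _ => hrow j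

lemma sum_range_comp_succ_le {h : ℕ → ℝ} (hh : ∀ i, 0 ≤ h i) {k m : ℕ} (hkm : k ≤ m) :
    ∑ i ∈ range k, h (i + 1) ≤ ∑ i ∈ range (m + 1), h i := by
  rw [sum_range_succ']
  refine le_add_of_le_of_nonneg ?_ (hh 0)
  exact sum_le_sum_of_subset_of_nonneg (range_subset_range.2 hkm) fun i _ _ => hh _

section TorusDistance

variable {N : ℕ} [NeZero N]

lemma sum_zmod_comp_val {M : Type*} [AddCommMonoid M] (f : ℕ → M) :
    ∑ a : ZMod N, f a.val = ∑ i ∈ range N, f i :=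
  sum_nbij' ZMod.val (↑) (fun a _ => mem_range.2 a.val_lt) (fun _ _ => mem_univ _)
    (fun a _ => ZMod.natCast_zmod_val a) (fun _ hi => ZMod.val_natCast_of_lt (mem_range.1 hi))
    (fun _ _ => rfl)

lemma sum_rhoN {M : Type*} [AddCommMonoid M] (h : ℕ → M) :
    ∑ a : ZMod N, h (rhoN N a)
      = ∑ i ∈ range (N / 2 + 1), h i + ∑ i ∈ range ((N - 1) / 2), h (i + 1) := by
  have hN : N / 2 + 1 + (N - 1) / 2 = N := by have := NeZero.ne N; omega
  calc ∑ a : ZMod N, h (rhoN N a)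
      = ∑ i ∈ range (N / 2 + 1 + (N - 1) / 2), h (if 2 * i ≤ N then i else N - i) := by
        rw [hN]; exact sum_zmod_comp_val (fun i => h (if 2 * i ≤ N then i else N - i))
    _ = _ := by
        rw [sum_range_add, ← sum_range_reflect (fun i => h (i + 1))]
        congr 1
        · exact sum_congr rfl fun i hi => by rw [if_pos (by rw [mem_range] at hi; omega)]
        · refine sum_congr rfl fun i hi => ?_
          rw [mem_range] at hi
          rw [if_neg (by omega)]
          congr 1
          omega

variable {h : ℕ → ℝ}

lemma sum_rhoN_le_two_mul (hh : ∀ i, 0 ≤ h i) :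
    ∑ a : ZMod N, h (rhoN N a) ≤ 2 * ∑ i ∈ range (N / 2 + 1), h i := by
  have hsub := sum_range_comp_succ_le hh (k := (N - 1) / 2) (m := N / 2) (by omega)
  rw [sum_rhoN]
  linarith

lemma two_mul_sum_le_sum_rhoN (hh : ∀ i, 0 ≤ h i) :
    2 * ∑ i ∈ range ((N - 1) / 2), h (i + 1) ≤ ∑ a : ZMod N, h (rhoN N a) := by
  have hsub := sum_range_comp_succ_le hh (k := (N - 1) / 2) (m := N / 2) (by omega)
  rw [sum_rhoN]
  linarith

lemma rhoN_eq_zero_iff {a : ZMod N} : rhoN N a = 0 ↔ a = 0 := by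
  rw [← ZMod.val_eq_zero, rhoN]
  have := a.val_lt
  split_ifs <;> omega

lemma torusDist_eq_zero_iff {u v : Vtx N} : torusDist N u v = 0 ↔ u = v := by
  rw [torusDist, Nat.add_eq_zero_iff, rhoN_eq_zero_iff, rhoN_eq_zero_iff, sub_eq_zero, sub_eq_zero,
    Prod.ext_iff]

lemma sum_inv_sq_torusDist_eq (v : Vtx N) :
    ∑ u : Vtx N, ((torusDist N v u : ℝ) ^ 2)⁻¹
      = ∑ a : ZMod N, ∑ b : ZMod N, (((rhoN N a : ℝ) + rhoN N b) ^ 2)⁻¹ := by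
  rw [← (Equiv.subLeft v).sum_comp, Fintype.sum_prod_type]
  simp [torusDist]

lemma sum_sum_inv_sq_rhoN_le :
    ∑ a : ZMod N, ∑ b : ZMod N, (((rhoN N a : ℝ) + rhoN N b) ^ 2)⁻¹ ≤ 4 * Real.log N + 20 := by
  set m := N / 2
  have hlog : Real.log m ≤ Real.log N := by
    rcases Nat.eq_zero_or_pos m with hm | hm
    · rw [hm, Nat.cast_zero, Real.log_zero]
      exact Real.log_natCast_nonneg N
    · exact Real.log_le_log (by exact_mod_cast hm) (by exact_mod_cast Nat.div_le_self N 2)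
  calc ∑ a : ZMod N, ∑ b : ZMod N, (((rhoN N a : ℝ) + rhoN N b) ^ 2)⁻¹
      ≤ ∑ a : ZMod N, 2 * ∑ l ∈ range (m + 1), (((rhoN N a : ℝ) + l) ^ 2)⁻¹ :=
        sum_le_sum fun a _ =>
          sum_rhoN_le_two_mul (h := fun l => (((rhoN N a : ℝ) + l) ^ 2)⁻¹)
            fun _ => inv_nonneg.2 (sq_nonneg _)
    _ = 2 * ∑ a : ZMod N, ∑ l ∈ range (m + 1), (((rhoN N a : ℝ) + l) ^ 2)⁻¹ := (mul_sum ..).symm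
    _ ≤ 2 * (2 * ∑ j ∈ range (m + 1), ∑ l ∈ range (m + 1), (((j : ℝ) + l) ^ 2)⁻¹) := by
        gcongr
        exact sum_rhoN_le_two_mul (h := fun j => ∑ l ∈ range (m + 1), (((j : ℝ) + l) ^ 2)⁻¹)
          fun _ => sum_nonneg fun _ _ => inv_nonneg.2 (sq_nonneg _)
    _ ≤ 4 * Real.log N + 20 := by linarith [sum_sum_inv_sq_add_le_log m]

lemma four_mul_log_sub_le_sum_sum_inv_sq_rhoN :
    4 * Real.log N - 12 ≤ ∑ a : ZMod N, ∑ b : ZMod N, (((rhoN N a : ℝ) + rhoN N b) ^ 2)⁻¹ := by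
  set m := (N - 1) / 2
  have hlog : Real.log N - Real.log 2 ≤ Real.log (m + 2) := by
    have hN : (0 : ℝ) < N := by exact_mod_cast Nat.pos_of_neZero N
    rw [← Real.log_div hN.ne' two_ne_zero]
    refine Real.log_le_log (by positivity) ((div_le_iff₀ two_pos).2 ?_)
    exact_mod_cast (show N ≤ (m + 2) * 2 by omega)
  have hlog_two : Real.log 2 < 1 := Real.log_two_lt_d9.trans (by norm_num)
  calc 4 * Real.log N - 12
      ≤ 2 * (2 * ∑ j ∈ range m, ∑ l ∈ range m, ((((j + 1 : ℕ) : ℝ) + (l + 1 : ℕ)) ^ 2)⁻¹) := by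
        push_cast
        linarith [log_sub_le_sum_sum_inv_sq m]
    _ ≤ 2 * ∑ a : ZMod N, ∑ l ∈ range m, (((rhoN N a : ℝ) + (l + 1 : ℕ)) ^ 2)⁻¹ := by
        gcongr
        exact two_mul_sum_le_sum_rhoN (h := fun j => ∑ l ∈ range m, (((j : ℝ) + (l + 1 : ℕ)) ^ 2)⁻¹)
          fun _ => sum_nonneg fun _ _ => inv_nonneg.2 (sq_nonneg _)
    _ = ∑ a : ZMod N, 2 * ∑ l ∈ range m, (((rhoN N a : ℝ) + (l + 1 : ℕ)) ^ 2)⁻¹ := mul_sum ..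
    _ ≤ _ := sum_le_sum fun a _ =>
        two_mul_sum_le_sum_rhoN (h := fun l => (((rhoN N a : ℝ) + l) ^ 2)⁻¹)
          fun _ => inv_nonneg.2 (sq_nonneg _)

lemma abs_sum_inv_sq_torusDist_sub_log_le (v : Vtx N) :
    |∑ u : Vtx N, ((torusDist N v u : ℝ) ^ 2)⁻¹ - 4 * Real.log N| ≤ 20 := by
  rw [sum_inv_sq_torusDist_eq, abs_le]
  constructor
  · linarith [four_mul_log_sub_le_sum_sum_inv_sq_rhoN (N := N)]
  · linarith [sum_sum_inv_sq_rhoN_le (N := N)]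

lemma edgeProb_eq_div {c : ℝ} (hcN : c ≤ N) (u v : Vtx N) :
    edgeProb N c u v = c / (N * torusDist N u v) := by
  rw [edgeProb]
  split_ifs with huv
  · simp [huv, torusDist_eq_zero_iff.2 rfl]
  · have hdist : (1 : ℝ) ≤ torusDist N u v := by
      exact_mod_cast Nat.one_le_iff_ne_zero.2 (torusDist_eq_zero_iff.not.2 huv)
    have hN : (1 : ℝ) ≤ N := by exact_mod_cast Nat.one_le_iff_ne_zero.2 (NeZero.ne N)
    refine min_eq_left ((div_le_one (by positivity)).2 ?_)
    nlinarith

end TorusDistance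

/-- For `c > 0` there are `C₀ > 0` and `N₀` such that for every `N ≥ N₀` and every
vertex `v`, `|Σ_u p(v,u)² − 4c²·(log N)/N²| ≤ C₀/N²`. -/
theorem stmt5 (c : ℝ) (hc : 0 < c) :
    ∃ C₀ : ℝ, 0 < C₀ ∧ ∃ N₀ : ℕ, ∀ (N : ℕ) [NeZero N], N₀ ≤ N →
      ∀ v : Vtx N,
        |(∑ u : Vtx N, (edgeProb N c v u) ^ 2) -
            4 * c ^ 2 * Real.log N / (N : ℝ) ^ 2| ≤ C₀ / (N : ℝ) ^ 2 := by
  refine ⟨20 * c ^ 2, by positivity, ⌈c⌉₊, fun N _ hN v => ?_⟩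
  have hsq (u : Vtx N) : edgeProb N c v u ^ 2 = c ^ 2 / N ^ 2 * ((torusDist N v u : ℝ) ^ 2)⁻¹ := by
    rw [edgeProb_eq_div (Nat.ceil_le.1 hN)]
    ring
  have hfactor : ∑ u : Vtx N, edgeProb N c v u ^ 2 - 4 * c ^ 2 * Real.log N / N ^ 2
      = c ^ 2 / N ^ 2 * (∑ u : Vtx N, ((torusDist N v u : ℝ) ^ 2)⁻¹ - 4 * Real.log N) := by
    rw [sum_congr rfl fun u _ => hsq u, ← mul_sum]
    ring
  rw [hfactor, abs_mul, abs_of_nonneg (by positivity)]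
  calc _ ≤ c ^ 2 / N ^ 2 * 20 := by gcongr; exact abs_sum_inv_sq_torusDist_sub_log_le v
    _ = 20 * c ^ 2 / N ^ 2 := by ring
end

section
/- Let c = c^cr = 1/(4 log 2) and fix K > 0. There exist a constant C' > 0 and N₀ such that for every integer N ≥ N₀, every subset A ⊆ V_N with |A| ≤ K·N^{4/3}, and every vertex v ∈ V_N ∖ A, the normalization Z_{N,A}(v) = Σ_{u ∈ V_N∖A, u ≠ v} p(u,v) satisfies |Z_{N,A}(v) − 1| ≤ C'·N^{−1/3}. -/
open scoped BigOperators

/-- The critical value `c^cr = 1/(4 log 2)`. -/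
noncomputable def ccr : ℝ := 1 / (4 * Real.log 2)

/-- `Z_{N,A}(v) = Σ_{u ∈ V_N∖A, u ≠ v} p(u,v)`. -/
noncomputable def ZNA (N : ℕ) [NeZero N] (c : ℝ) (A : Finset (Vtx N)) (v : Vtx N) : ℝ :=
  ∑ u ∈ (Finset.univ \ A).erase v, edgeProb N c u v

/-!
Translating by `v` and sorting residues by `ρ_N`, whose values `1, …, ⌊N/2⌋` are each taken at
most twice (with multiplicities adding up to `N`), turns `∑_u 1/ρ(u,v)` into
`4 ∑_{0 ≤ j,k ≤ m} 1/(j+k)`, `m = ⌊N/2⌋`, up to two boundary rows of size `O(log N)`. The square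
sum equals `H_m + (2m+1)(H_{2m} - H_m) = 2m log 2 + O(log m)`, so at `c = 1/(4 log 2)` the full
sum `∑_{u ≠ v} p(u,v)` is `1 + O(log N / N)`. Removing `A` costs `O(N^{-1/3})`: the vertices at
distance `≤ r = ⌈N^{2/3}⌉` contribute `O(r/N)` in total, and each of the at most `K N^{4/3}`
others contributes at most `c/(N r)`.
-/

open Finset Real

section TorusSums

variable {N : ℕ} [NeZero N]

lemma rhoN_le_half (a : ZMod N) : rhoN N a ≤ N / 2 := by
  have := ZMod.val_lt a
  unfold rhoN
  split_ifs <;> omega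

lemma eq_or_eq_neg_of_rhoN_eq {a : ZMod N} {j : ℕ} (h : rhoN N a = j) :
    a = j ∨ a = -(j : ZMod N) := by
  have := ZMod.val_lt a
  unfold rhoN at h
  split_ifs at h
  · exact .inl (by rw [← h, ZMod.natCast_zmod_val])
  · have hsum : a.val + j = N := by omega
    refine .inr (eq_neg_iff_add_eq_zero.mpr ?_)
    rw [← ZMod.natCast_zmod_val a, ← Nat.cast_add, hsum, ZMod.natCast_self]

variable (N) in
def rhoNCard (j : ℕ) : ℕ := #{a : ZMod N | rhoN N a = j}

lemma rhoNCard_le_two (j : ℕ) : rhoNCard N j ≤ 2 :=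
  calc rhoNCard N j ≤ #({(j : ZMod N), -(j : ZMod N)} : Finset (ZMod N)) :=
        card_le_card fun a ha => by
          rcases eq_or_eq_neg_of_rhoN_eq (mem_filter.mp ha).2 with rfl | rfl <;> simp
    _ ≤ 2 := card_le_two

lemma sum_comp_rhoN {M : Type*} [AddCommMonoid M] (h : ℕ → M) :
    ∑ a : ZMod N, h (rhoN N a) = ∑ j ∈ range (N / 2 + 1), rhoNCard N j • h j := by
  rw [sum_comp]
  refine sum_subset (fun j hj => ?_) (fun j _ hj => ?_)
  · obtain ⟨a, -, rfl⟩ := mem_image.mp hj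
    exact mem_range.mpr (Nat.lt_succ_of_le (rhoN_le_half a))
  · have hempty : ({a | rhoN N a = j} : Finset (ZMod N)) = ∅ :=
      filter_eq_empty_iff.mpr fun a _ ha => hj (mem_image.mpr ⟨a, mem_univ a, ha⟩)
    rw [hempty, card_empty, zero_smul]

lemma sum_rhoNCard : ∑ j ∈ range (N / 2 + 1), rhoNCard N j = N := by
  have h := sum_comp_rhoN (N := N) fun _ => (1 : ℕ)
  simp only [sum_const, card_univ, ZMod.card, smul_eq_mul, mul_one] at h
  exact h.symm

lemma sum_torusDist_eq (v : Vtx N) (F : ℕ → ℝ) :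
    ∑ u, F (torusDist N u v) = ∑ j ∈ range (N / 2 + 1), ∑ k ∈ range (N / 2 + 1),
      ((rhoNCard N j : ℝ) * rhoNCard N k) * F (j + k) := by
  have htrans : ∑ u, F (torusDist N u v) = ∑ a : ZMod N, ∑ b : ZMod N, F (rhoN N a + rhoN N b) := by
    rw [← Fintype.sum_prod_type']
    exact Fintype.sum_equiv (Equiv.subRight v) _ _ fun u => rfl
  calc ∑ u, F (torusDist N u v)
      = ∑ a : ZMod N, ∑ k ∈ range (N / 2 + 1), rhoNCard N k • F (rhoN N a + k) := by
        rw [htrans]; exact sum_congr rfl fun a _ => sum_comp_rhoN fun k => F (rhoN N a + k)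
    _ = ∑ k ∈ range (N / 2 + 1),
          rhoNCard N k • ∑ j ∈ range (N / 2 + 1), rhoNCard N j • F (j + k) := by
        rw [sum_comm]
        refine sum_congr rfl fun k _ => ?_
        rw [← sum_comp_rhoN fun j => F (j + k), smul_sum]
    _ = _ := by
        rw [sum_comm]
        simp only [smul_sum, nsmul_eq_mul]
        refine sum_congr rfl fun j _ => sum_congr rfl fun k _ => by ring

end TorusSums

section WeightedSquareSums

variable {ι : Type*} (s : Finset ι) {f : ι → ℝ} {G : ι → ι → ℝ}

lemma sum_sum_mul_mul_le (hf0 : ∀ i ∈ s, 0 ≤ f i) (hf2 : ∀ i ∈ s, f i ≤ 2)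
    (hG : ∀ i ∈ s, ∀ j ∈ s, 0 ≤ G i j) :
    ∑ i ∈ s, ∑ j ∈ s, f i * f j * G i j ≤ 4 * ∑ i ∈ s, ∑ j ∈ s, G i j := by
  simp only [mul_sum]
  refine sum_le_sum fun i hi => sum_le_sum fun j hj => ?_
  have : f i * f j ≤ 2 * 2 := mul_le_mul (hf2 i hi) (hf2 j hj) (hf0 j hj) zero_le_two
  nlinarith [hG i hi j hj]

lemma sub_le_sum_sum_mul_mul {R : ℝ} (hf2 : ∀ i ∈ s, f i ≤ 2)
    (hG : ∀ i ∈ s, ∀ j ∈ s, 0 ≤ G i j) (hsymm : ∀ i j, G i j = G j i)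
    (hrow : ∀ i ∈ s, ∑ j ∈ s, G i j ≤ R) :
    4 * ∑ i ∈ s, ∑ j ∈ s, G i j - 4 * (∑ i ∈ s, (2 - f i)) * R
      ≤ ∑ i ∈ s, ∑ j ∈ s, f i * f j * G i j := by
  -- `4 - f i * f j = 2 (2 - f i) + 2 (2 - f j) - (2 - f i) (2 - f j)`, the last product `≥ 0`
  have hpt : ∑ i ∈ s, ∑ j ∈ s, (4 * G i j - f i * f j * G i j)
      ≤ ∑ i ∈ s, ∑ j ∈ s, (2 * ((2 - f i) * G i j) + 2 * ((2 - f j) * G i j)) :=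
    sum_le_sum fun i hi => sum_le_sum fun j hj => by
      nlinarith [mul_nonneg (mul_nonneg (sub_nonneg.2 (hf2 i hi)) (sub_nonneg.2 (hf2 j hj)))
        (hG i hi j hj)]
  have hswap : ∑ i ∈ s, ∑ j ∈ s, (2 - f j) * G i j = ∑ i ∈ s, (2 - f i) * ∑ j ∈ s, G i j := by
    rw [sum_comm]
    refine sum_congr rfl fun i _ => ?_
    rw [mul_sum]
    exact sum_congr rfl fun j _ => by rw [hsymm]
  have hrows : ∑ i ∈ s, (2 - f i) * ∑ j ∈ s, G i j ≤ (∑ i ∈ s, (2 - f i)) * R := by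
    rw [sum_mul]
    exact sum_le_sum fun i hi => mul_le_mul_of_nonneg_left (hrow i hi) (by linarith [hf2 i hi])
  simp only [sum_sub_distrib, sum_add_distrib, ← mul_sum] at hpt
  rw [hswap] at hpt
  linarith

end WeightedSquareSums

lemma sum_range_inv_add_succ (a n : ℕ) :
    ∑ k ∈ range n, ((a + k + 1 : ℕ) : ℝ)⁻¹ = harmonic (a + n) - harmonic a := by
  induction n with
  | zero => simp
  | succ n ih =>
    rw [sum_range_succ, ih, ← add_assoc, harmonic_succ]
    push_cast
    ring

lemma sum_range_inv_add_le (j m : ℕ) :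
    ∑ k ∈ range (m + 1), ((j + k : ℕ) : ℝ)⁻¹ ≤ 1 + harmonic m := by
  rw [sum_range_succ', add_comm, harmonic, Rat.cast_sum]
  gcongr with k
  · simpa using Nat.cast_inv_le_one j
  · push_cast
    exact inv_anti₀ (by positivity) (by linarith [(j.cast_nonneg : (0 : ℝ) ≤ j)])

-- The `(0, 0)` term is `(0 : ℝ)⁻¹ = 0`.
noncomputable def squareInvSum (m : ℕ) : ℝ :=
  ∑ j ∈ range (m + 1), ∑ k ∈ range (m + 1), ((j + k : ℕ) : ℝ)⁻¹

lemma squareInvSum_eq (m : ℕ) :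
    squareInvSum m = harmonic m + (2 * m + 1) * (harmonic (2 * m) - harmonic m) := by
  induction m with
  | zero => simp [squareInvSum]
  | succ m ih =>
    have hcol : ∑ j ∈ range (m + 1), ((j + (m + 1) : ℕ) : ℝ)⁻¹
        = harmonic (2 * m + 1) - harmonic m := by
      rw [show 2 * m + 1 = m + (m + 1) by ring, ← sum_range_inv_add_succ]
      exact sum_congr rfl fun j _ => by congr 2; ring
    have hrow : ∑ k ∈ range (m + 1), ((m + 1 + k : ℕ) : ℝ)⁻¹
        = harmonic (2 * m + 1) - harmonic m := by
      rw [← hcol]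
      exact sum_congr rfl fun j _ => by congr 2; ring
    have hstep : squareInvSum (m + 1)
        = squareInvSum m + 2 * (harmonic (2 * m + 1) - harmonic m) + ((2 * m + 2 : ℕ) : ℝ)⁻¹ := by
      simp only [squareInvSum, sum_range_succ _ (m + 1), sum_add_distrib, hcol, hrow]
      rw [show m + 1 + (m + 1) = 2 * m + 2 by ring]
      ring
    rw [hstep, ih, show 2 * (m + 1) = 2 * m + 1 + 1 by ring, harmonic_succ (2 * m + 1),
      harmonic_succ (2 * m), harmonic_succ m]
    push_cast
    field_simp
    ring

lemma log_add_one_sub_log_le {x : ℝ} (hx : 0 < x) : log (x + 1) - log x ≤ x⁻¹ := by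
  rw [← log_div (by positivity) hx.ne']
  calc log ((x + 1) / x) ≤ (x + 1) / x - 1 := log_le_sub_one_of_pos (by positivity)
    _ = x⁻¹ := by field_simp; ring

lemma abs_harmonic_two_mul_sub_sub_log_two_le {m : ℕ} (hm : m ≠ 0) :
    |(harmonic (2 * m) : ℝ) - harmonic m - log 2| ≤ (m : ℝ)⁻¹ := by
  have h1 := eulerMascheroniSeq_lt_eulerMascheroniSeq' (2 * m) m
  have h2 := eulerMascheroniSeq_lt_eulerMascheroniSeq' m (2 * m)
  simp only [eulerMascheroniSeq, eulerMascheroniSeq', hm, mul_ne_zero two_ne_zero hm,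
    if_false] at h1 h2
  push_cast at h1 h2
  have hlog1 := log_add_one_sub_log_le (x := 2 * m) (by positivity)
  have hlog2 := log_add_one_sub_log_le (x := m) (by positivity)
  have hmul : log (2 * m) = log 2 + log m := log_mul two_ne_zero (by positivity)
  have hinv : (2 * (m : ℝ))⁻¹ ≤ (m : ℝ)⁻¹ := inv_anti₀ (by positivity) (by linarith)
  rw [abs_le]
  constructor <;> linarith

lemma abs_squareInvSum_sub_le {m : ℕ} (hm : m ≠ 0) :
    |squareInvSum m - 2 * m * log 2| ≤ harmonic m + 4 := by
  have hD := abs_harmonic_two_mul_sub_sub_log_two_le hm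
  have hE : |(2 * m + 1 : ℝ) * (harmonic (2 * m) - harmonic m - log 2)| ≤ 3 := by
    rw [abs_mul, abs_of_pos (by positivity)]
    calc (2 * m + 1 : ℝ) * |(harmonic (2 * m) : ℝ) - harmonic m - log 2|
        ≤ (2 * m + 1) * (m : ℝ)⁻¹ := by gcongr
      _ = 2 + (m : ℝ)⁻¹ := by field_simp
      _ ≤ 3 := by linarith [Nat.cast_inv_le_one (α := ℝ) m]
  have hH : (0 : ℝ) ≤ harmonic m := by exact_mod_cast (harmonic_pos hm).le
  rw [abs_le] at hE ⊢
  rw [squareInvSum_eq]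
  constructor <;> linarith [log_two_lt_d9, log_two_gt_d9]

lemma squareInvSum_le {r : ℕ} (hr : r ≠ 0) : squareInvSum r ≤ 7 * r := by
  have h := abs_le.mp (abs_squareInvSum_sub_le hr)
  have hH : (harmonic r : ℝ) ≤ r := by
    have hr0 : (0 : ℝ) < r := by positivity
    linarith [harmonic_le_one_add_log r, log_le_sub_one_of_pos hr0]
  have hr1 : (1 : ℝ) ≤ r := by exact_mod_cast Nat.one_le_iff_ne_zero.mpr hr
  nlinarith [log_two_lt_d9]

lemma sum_sum_ite_inv_le_squareInvSum (m r : ℕ) :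
    ∑ j ∈ range (m + 1), ∑ k ∈ range (m + 1),
      (if j + k ≤ r then ((j + k : ℕ) : ℝ)⁻¹ else 0) ≤ squareInvSum r := by
  rw [squareInvSum, ← sum_product', ← sum_product', ← sum_filter]
  refine sum_le_sum_of_subset_of_nonneg (fun p hp => ?_) (fun _ _ _ => by positivity)
  simp only [mem_filter, mem_product, mem_range] at hp ⊢
  omega

lemma sum_inv_le_sum_ite_add_card_div {α : Type*} [Fintype α] (s : Finset α) (d : α → ℕ)
    {r : ℕ} (hr : r ≠ 0) :
    ∑ x ∈ s, (d x : ℝ)⁻¹ ≤ ∑ x, (if d x ≤ r then (d x : ℝ)⁻¹ else 0) + #s / r := by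
  have hpt : ∀ x ∈ s, (d x : ℝ)⁻¹ ≤ (if d x ≤ r then (d x : ℝ)⁻¹ else 0) + (r : ℝ)⁻¹ := by
    intro x _
    split_ifs with h
    · linarith [inv_nonneg.mpr (r.cast_nonneg : (0 : ℝ) ≤ r)]
    · rw [zero_add]
      exact inv_anti₀ (by positivity) (by exact_mod_cast (not_le.mp h).le)
  calc ∑ x ∈ s, (d x : ℝ)⁻¹
      ≤ ∑ x ∈ s, ((if d x ≤ r then (d x : ℝ)⁻¹ else 0) + (r : ℝ)⁻¹) := sum_le_sum hpt
    _ ≤ ∑ x, (if d x ≤ r then (d x : ℝ)⁻¹ else 0) + #s / r := by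
        rw [sum_add_distrib, sum_const, nsmul_eq_mul, ← div_eq_mul_inv]
        gcongr
        exact subset_univ s

lemma ccr_mul_four_mul_log_two : ccr * (4 * log 2) = 1 :=
  one_div_mul_cancel (by positivity)

lemma ccr_nonneg : 0 ≤ ccr := by
  rw [ccr]; positivity

lemma ccr_le_half : ccr ≤ 1 / 2 := by
  rw [ccr]
  gcongr
  linarith [log_two_gt_d9]

lemma ccr_le_one : ccr ≤ 1 := ccr_le_half.trans (by norm_num)

section Torus

variable {N : ℕ}

-- For `u = v` both sides vanish, the right one because `(0 : ℝ)⁻¹ = 0`.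
lemma edgeProb_eq {c : ℝ} (hc1 : c ≤ 1) (u v : Vtx N) :
    edgeProb N c u v = c / N * (torusDist N u v : ℝ)⁻¹ := by
  rw [edgeProb]
  split_ifs with h
  · simp [h, torusDist, rhoN]
  · rw [min_eq_left, div_mul_eq_div_div, div_eq_mul_inv (c / N)]
    rcases (N * torusDist N u v).eq_zero_or_pos with h0 | h0
    · rw [← Nat.cast_mul, h0]; simp
    · have : (1 : ℝ) ≤ N * torusDist N u v := by exact_mod_cast h0
      exact (div_le_one (by linarith)).mpr (by linarith)

variable [NeZero N]

lemma ZNA_eq_sub (c : ℝ) (A : Finset (Vtx N)) (v : Vtx N) :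
    ZNA N c A v = ∑ u, edgeProb N c u v - ∑ u ∈ A, edgeProb N c u v := by
  rw [ZNA, sum_erase _ (by simp [edgeProb]), sum_sdiff_eq_sub (subset_univ A)]

lemma abs_sum_inv_torusDist_sub_le (hN : 2 ≤ N) (v : Vtx N) :
    |∑ u, (torusDist N u v : ℝ)⁻¹ - 4 * N * log 2| ≤ 12 * harmonic (N / 2) + 28 := by
  set H := N / 2
  have hH0 : H ≠ 0 := by omega
  have hNH : 2 * H ≤ N ∧ N ≤ 2 * H + 1 := by omega
  have hNH' : (2 * H : ℝ) ≤ N ∧ (N : ℝ) ≤ 2 * H + 1 := by exact_mod_cast hNH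
  rw [sum_torusDist_eq v fun d => (d : ℝ)⁻¹]
  have hf2 : ∀ j ∈ range (H + 1), (rhoNCard N j : ℝ) ≤ 2 := fun j _ => by
    exact_mod_cast rhoNCard_le_two j
  have hG : ∀ j ∈ range (H + 1), ∀ k ∈ range (H + 1), (0 : ℝ) ≤ ((j + k : ℕ) : ℝ)⁻¹ :=
    fun _ _ _ _ => by positivity
  have hup := sum_sum_mul_mul_le (range (H + 1)) (fun j _ => Nat.cast_nonneg _) hf2 hG
  have hlow := sub_le_sum_sum_mul_mul (range (H + 1)) hf2 hG (fun j k => by rw [add_comm])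
    (fun j _ => sum_range_inv_add_le j H)
  have hdef : ∑ j ∈ range (H + 1), (2 - (rhoNCard N j : ℝ)) = 2 * H + 2 - N := by
    rw [sum_sub_distrib, ← Nat.cast_sum, sum_rhoNCard, sum_const, card_range, nsmul_eq_mul]
    push_cast
    ring
  have hT := abs_le.mp (abs_squareInvSum_sub_le hH0)
  rw [hdef] at hlow
  change _ ≤ 4 * squareInvSum H at hup
  change 4 * squareInvSum H - _ ≤ _ at hlow
  have hharm : (0 : ℝ) ≤ harmonic H := by exact_mod_cast (harmonic_pos hH0).le
  have hlog2 := log_two_lt_d9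
  have hlog2' := log_two_gt_d9
  rw [abs_le]
  constructor <;> nlinarith

lemma sum_ite_inv_torusDist_le {r : ℕ} (hr : r ≠ 0) (v : Vtx N) :
    ∑ u, (if torusDist N u v ≤ r then (torusDist N u v : ℝ)⁻¹ else 0) ≤ 28 * r := by
  rw [sum_torusDist_eq v fun d => if d ≤ r then (d : ℝ)⁻¹ else 0]
  calc _ ≤ 4 * ∑ j ∈ range (N / 2 + 1), ∑ k ∈ range (N / 2 + 1),
          (if j + k ≤ r then ((j + k : ℕ) : ℝ)⁻¹ else 0) :=
        sum_sum_mul_mul_le _ (fun j _ => Nat.cast_nonneg _)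
          (fun j _ => by exact_mod_cast rhoNCard_le_two j)
          (fun _ _ _ _ => by split_ifs <;> positivity)
    _ ≤ 4 * squareInvSum r := by gcongr; exact sum_sum_ite_inv_le_squareInvSum _ r
    _ ≤ 28 * r := by linarith [squareInvSum_le hr]

lemma abs_sum_edgeProb_sub_one_le (hN : 2 ≤ N) (v : Vtx N) :
    |∑ u, edgeProb N ccr u v - 1| ≤ 29 * (N : ℝ) ^ (-(1 : ℝ) / 3) := by
  have hN1 : (1 : ℝ) ≤ N := by exact_mod_cast NeZero.one_le
  have hN0 : (0 : ℝ) < N := by linarith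
  have hx1 : 1 ≤ (N : ℝ) ^ ((2 : ℝ) / 3) := one_le_rpow hN1 (by norm_num)
  have hpow : (N : ℝ) ^ (-(1 : ℝ) / 3) = (N : ℝ) ^ ((2 : ℝ) / 3) / N := by
    rw [show -(1 : ℝ) / 3 = 2 / 3 - 1 by norm_num, rpow_sub hN0, rpow_one]
  have hlog : log N ≤ 3 / 2 * (N : ℝ) ^ ((2 : ℝ) / 3) := by
    have := log_le_rpow_div hN0.le (by norm_num : (0 : ℝ) < 2 / 3)
    linarith
  have hharm : (harmonic (N / 2) : ℝ) ≤ 1 + log N := by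
    have : log (N / 2 : ℕ) ≤ log N :=
      log_le_log (by exact_mod_cast Nat.div_pos hN two_pos) (by exact_mod_cast Nat.div_le_self N 2)
    linarith [harmonic_le_one_add_log (N / 2)]
  have hS := abs_sum_inv_torusDist_sub_le hN v
  have hsub : ccr / N * ∑ u, (torusDist N u v : ℝ)⁻¹ - 1
      = ccr / N * (∑ u, (torusDist N u v : ℝ)⁻¹ - 4 * N * log 2) := by
    rw [mul_sub, ← ccr_mul_four_mul_log_two]
    field_simp
  simp_rw [edgeProb_eq ccr_le_one]
  rw [← mul_sum, hsub, abs_mul, abs_of_nonneg (div_nonneg ccr_nonneg hN0.le), hpow]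
  calc ccr / N * |∑ u, (torusDist N u v : ℝ)⁻¹ - 4 * N * log 2|
      ≤ (1 / 2) / N * (58 * (N : ℝ) ^ ((2 : ℝ) / 3)) := by
        gcongr
        · exact ccr_le_half
        · linarith
    _ = 29 * ((N : ℝ) ^ ((2 : ℝ) / 3) / N) := by ring

lemma sum_edgeProb_le (A : Finset (Vtx N)) {K : ℝ}
    (hA : (#A : ℝ) ≤ K * (N : ℝ) ^ ((4 : ℝ) / 3)) (v : Vtx N) :
    ∑ u ∈ A, edgeProb N ccr u v ≤ (28 + K / 2) * (N : ℝ) ^ (-(1 : ℝ) / 3) := by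
  have hN1 : (1 : ℝ) ≤ N := by exact_mod_cast NeZero.one_le
  have hN0 : (0 : ℝ) < N := by linarith
  set x := (N : ℝ) ^ ((2 : ℝ) / 3) with hx
  have hx1 : 1 ≤ x := one_le_rpow hN1 (by norm_num)
  have hpow : (N : ℝ) ^ (-(1 : ℝ) / 3) = x / N := by
    rw [hx, show -(1 : ℝ) / 3 = 2 / 3 - 1 by norm_num, rpow_sub hN0, rpow_one]
  have hpow' : (N : ℝ) ^ ((4 : ℝ) / 3) = x * x := by
    rw [hx, ← rpow_add hN0]; norm_num
  -- the threshold `r ≈ N^{2/3}` balances the near and the far contributions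
  set r := ⌈x⌉₊
  have hxr : x ≤ r := Nat.le_ceil x
  have hrx : (r : ℝ) ≤ 2 * x := by linarith [Nat.ceil_lt_add_one (by positivity : 0 ≤ x)]
  have hr : r ≠ 0 := (Nat.ceil_pos.mpr (by linarith)).ne'
  have hfar : (#A : ℝ) / r ≤ K * x := by
    calc (#A : ℝ) / r ≤ #A / x := by gcongr
      _ ≤ K * x * x / x := by rw [mul_assoc, ← hpow']; gcongr
      _ = K * x := by field_simp
  have hsplit := sum_inv_le_sum_ite_add_card_div A (fun u => torusDist N u v) hr
  have hnear := sum_ite_inv_torusDist_le hr v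
  simp_rw [edgeProb_eq ccr_le_one]
  rw [← mul_sum, hpow]
  calc ccr / N * ∑ u ∈ A, (torusDist N u v : ℝ)⁻¹
      ≤ (1 / 2) / N * (56 * x + K * x) := by
        gcongr
        · exact ccr_le_half
        · linarith
    _ = (28 + K / 2) * (x / N) := by ring

end Torus

/-- At criticality, for every `K > 0` there are `C' > 0` and `N₀` such that for every
`N ≥ N₀`, every `A ⊆ V_N` with `|A| ≤ K·N^{4/3}` and every `v ∉ A`,
`|Z_{N,A}(v) − 1| ≤ C'·N^{−1/3}`. -/
theorem stmt14 (K : ℝ) (hK : 0 < K) :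
    ∃ C' : ℝ, 0 < C' ∧ ∃ N₀ : ℕ, ∀ (N : ℕ) [NeZero N], N₀ ≤ N →
      ∀ A : Finset (Vtx N), (A.card : ℝ) ≤ K * (N : ℝ) ^ ((4 : ℝ) / 3) →
        ∀ v : Vtx N, v ∉ A →
          |ZNA N ccr A v - 1| ≤ C' * (N : ℝ) ^ (-(1 : ℝ) / 3) := by
  refine ⟨57 + K, by linarith, 2, fun N _ hN A hA v _ => ?_⟩
  have hfull := abs_sum_edgeProb_sub_one_le hN v
  have hrem := sum_edgeProb_le A hA v
  have hrem0 : 0 ≤ ∑ u ∈ A, edgeProb N ccr u v :=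
    sum_nonneg fun u _ => by
      rw [edgeProb_eq ccr_le_one]
      exact mul_nonneg (div_nonneg ccr_nonneg N.cast_nonneg) (inv_nonneg.mpr (Nat.cast_nonneg _))
  have hX : 0 ≤ (N : ℝ) ^ (-(1 : ℝ) / 3) := by positivity
  rw [ZNA_eq_sub, sub_right_comm]
  calc |∑ u, edgeProb N ccr u v - 1 - ∑ u ∈ A, edgeProb N ccr u v|
      ≤ |∑ u, edgeProb N ccr u v - 1| + |∑ u ∈ A, edgeProb N ccr u v| := abs_sub _ _
    _ ≤ (57 + K) * (N : ℝ) ^ (-(1 : ℝ) / 3) := by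
        rw [abs_of_nonneg hrem0]; nlinarith
end
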